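/- The minimum of a function f: Dⁿ → ℝ over Dⁿ equals the minimum of its Lovász extension f^L over [-α,1]ⁿ. -/

import Mathlib

/-
Both minima are attained at a minimiser `a` of `f`. On the one hand `f^L(x)` is an average of
values of `f`, so it is at least `f a`. On the other hand the point `a` itself lies in `[-α,1]ⁿ`,
and a chain distribution with marginal `a` must be the point mass at `a`: coordinates of `a`
equal to `1` or `-α` are extreme values, so every atom agrees with `a` there, while at a
coordinate where `a` vanishes the atoms of a chain cannot take both values `1` and `-α`, so they
all take values of one sign averaging to `0`.
-/

open Finset

/-- The three-element domain `D = {-α, 0, 1}`, abstractly. -/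
inductive D3 : Type
  | neg : D3
  | zero : D3
  | one : D3
deriving DecidableEq

instance : Fintype D3 :=
  ⟨{D3.neg, D3.zero, D3.one}, by rintro (_ | _ | _) <;> simp⟩

namespace D3

/-- The embedding of `D3` into `ℝ` sending `neg ↦ -α`, `zero ↦ 0`, `one ↦ 1`. -/
def emb (α : ℝ) : D3 → ℝ
  | neg => -α
  | zero => 0
  | one => 1

/-- The partial order `0 ≺ 1`, `0 ≺ -α`, with `1` and `-α` incomparable. -/
instance : PartialOrder D3 where
  le x y := x = y ∨ x = zero
  le_refl x := Or.inl rfl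
  le_trans x y z hxy hyz := by
    rcases hxy with rfl | rfl
    · exact hyz
    · exact Or.inr rfl
  le_antisymm x y hxy hyx := by
    rcases hxy with rfl | rfl
    · rfl
    · rcases hyx with rfl | rfl <;> rfl

/-- `∧₀` : `1 ∧₀ (-α) = (-α) ∧₀ 1 = 0`, and min w.r.t. `≺` otherwise. -/
def meet0 (x y : D3) : D3 := if x = y then x else zero

/-- `∨₀` : `1 ∨₀ (-α) = (-α) ∨₀ 1 = 0`, and max w.r.t. `≺` otherwise. -/
def join0 (x y : D3) : D3 :=
  if x = y then x else if x = zero then y else if y = zero then x else zero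

/-- `∨₁` : `1 ∨₁ (-α) = (-α) ∨₁ 1 = 1`, and max w.r.t. `≺` otherwise. -/
def join1 (x y : D3) : D3 :=
  if x = y then x else if x = zero then y else if y = zero then x else one

end D3

/-- Componentwise `∧₀` on `Dⁿ`. -/
def vmeet0 {n : ℕ} (a b : Fin n → D3) : Fin n → D3 := fun i => D3.meet0 (a i) (b i)

/-- Componentwise `∨₀` on `Dⁿ`. -/
def vjoin0 {n : ℕ} (a b : Fin n → D3) : Fin n → D3 := fun i => D3.join0 (a i) (b i)

/-- Componentwise `∨₁` on `Dⁿ`. -/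
def vjoin1 {n : ℕ} (a b : Fin n → D3) : Fin n → D3 := fun i => D3.join1 (a i) (b i)

/-- `lam` is a probability distribution on `Dⁿ`. -/
def IsDist (n : ℕ) (lam : (Fin n → D3) → ℝ) : Prop :=
  (∀ a, 0 ≤ lam a ∧ lam a ≤ 1) ∧ ∑ a : Fin n → D3, lam a = 1

/-- `lam` has marginal vector `x`, i.e. `Σ_a lam(a)·a = x` in `ℝⁿ`. -/
def HasMarginal (α : ℝ) (n : ℕ) (lam : (Fin n → D3) → ℝ) (x : Fin n → ℝ) : Prop :=
  ∀ i, ∑ a : Fin n → D3, lam a * D3.emb α (a i) = x i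

/-- The support of `lam` forms a chain w.r.t. the componentwise order on `Dⁿ`. -/
def ChainSupp (n : ℕ) (lam : (Fin n → D3) → ℝ) : Prop :=
  ∀ a b : Fin n → D3, lam a ≠ 0 → lam b ≠ 0 → a ≤ b ∨ b ≤ a

/-- The box `[-α,1]ⁿ`. -/
def Box (α : ℝ) (n : ℕ) : Set (Fin n → ℝ) := {x | ∀ i, x i ∈ Set.Icc (-α) 1}

/-- `f : Dⁿ → ℝ` is α-bisubmodular. -/
def AlphaBisub (α : ℝ) (n : ℕ) (f : (Fin n → D3) → ℝ) : Prop :=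
  ∀ a b : Fin n → D3,
    f (vmeet0 a b) + α * f (vjoin0 a b) + (1 - α) * f (vjoin1 a b) ≤ f a + f b

/-- Number of zero coordinates. -/
def zc {n : ℕ} (c : Fin n → D3) : ℕ := (Finset.univ.filter fun i => c i = D3.zero).card

/-- The convex closure `f⁻(x)`. -/
noncomputable def cClos (α : ℝ) (n : ℕ) (f : (Fin n → D3) → ℝ) (x : Fin n → ℝ) : ℝ :=
  sInf {y | ∃ lam, IsDist n lam ∧ HasMarginal α n lam x ∧ y = ∑ a : Fin n → D3, lam a * f a}

theorem eq_of_sum_mul_eq_of_le {ι : Type*} [Fintype ι] {w v : ι → ℝ} {m : ℝ}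
    (hw : ∀ i, 0 ≤ w i) (hw1 : ∑ i, w i = 1) (hv : ∀ i, w i ≠ 0 → v i ≤ m)
    (hm : ∑ i, w i * v i = m) {j : ι} (hj : w j ≠ 0) : v j = m := by
  have hsum : ∑ i, w i * (m - v i) = 0 := by
    simp only [mul_sub, sum_sub_distrib, ← sum_mul, hw1, hm]
    ring
  have hterm_nonneg : ∀ i ∈ univ, 0 ≤ w i * (m - v i) := fun i _ => by
    by_cases h : w i = 0
    · simp [h]
    · exact mul_nonneg (hw i) (sub_nonneg.2 (hv i h))
  rcases mul_eq_zero.1 ((sum_eq_zero_iff_of_nonneg hterm_nonneg).1 hsum j (mem_univ j)) with h | h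
  · exact absurd h hj
  · linarith

namespace D3

instance : Nonempty D3 := ⟨zero⟩

variable {α : ℝ}

@[simp] theorem emb_neg : emb α neg = -α := rfl

@[simp] theorem emb_zero : emb α zero = 0 := rfl

@[simp] theorem emb_one : emb α one = 1 := rfl

theorem emb_injective (hα : 0 < α) : Function.Injective (emb α) := by
  rintro (_ | _ | _) (_ | _ | _) h <;> simp only [emb_neg, emb_zero, emb_one] at h <;> first | rfl | linarith

theorem neg_le_emb (hα : 0 ≤ α) (c : D3) : -α ≤ emb α c := by
  cases c <;> simp only [emb_neg, emb_zero, emb_one] <;> linarith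

theorem emb_le_one (hα : -1 ≤ α) (c : D3) : emb α c ≤ 1 := by
  cases c <;> simp only [emb_neg, emb_zero, emb_one] <;> linarith

theorem emb_mul_emb_nonneg {x y : D3} (h : x ≤ y ∨ y ≤ x) : 0 ≤ emb α x * emb α y := by
  rcases h with (rfl | rfl) | (rfl | rfl)
  · exact mul_self_nonneg _
  · simp
  · exact mul_self_nonneg _
  · simp

end D3

section ChainDistribution

variable {α : ℝ} {n : ℕ} {lam : (Fin n → D3) → ℝ} {a : Fin n → D3}

theorem emb_comp_mem_box (hα : 0 ≤ α) (a : Fin n → D3) : D3.emb α ∘ a ∈ Box α n :=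
  fun i => ⟨D3.neg_le_emb hα _, D3.emb_le_one (by linarith) _⟩

theorem emb_apply_eq_of_hasMarginal (hα : 0 ≤ α) (hdist : IsDist n lam)
    (hmarg : HasMarginal α n lam (D3.emb α ∘ a)) (hchain : ChainSupp n lam)
    {b : Fin n → D3} (hb : lam b ≠ 0) (i : Fin n) : D3.emb α (b i) = D3.emb α (a i) := by
  obtain ⟨hnonneg, hsum⟩ := hdist
  have hm : ∑ c, lam c * D3.emb α (c i) = D3.emb α (a i) := hmarg i
  cases hai : a i with
  | one =>
    rw [hai, D3.emb_one] at hm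
    exact eq_of_sum_mul_eq_of_le (fun c => (hnonneg c).1) hsum
      (fun c _ => D3.emb_le_one (by linarith) _) hm hb
  | neg =>
    have hm' : ∑ c, lam c * -D3.emb α (c i) = α := by
      simp only [mul_neg, sum_neg_distrib, hm, hai, D3.emb_neg, neg_neg]
    have := eq_of_sum_mul_eq_of_le (fun c => (hnonneg c).1) hsum
      (fun c _ => neg_le.1 (D3.neg_le_emb hα _)) hm' hb
    rw [D3.emb_neg]
    linarith
  | zero =>
    -- along a chain, the `i`-th coordinates all have the sign of `b i`
    have hm' : ∑ c, lam c * -(D3.emb α (b i) * D3.emb α (c i)) = 0 := by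
      simp only [mul_neg, sum_neg_distrib, mul_left_comm _ (D3.emb α (b i)), ← mul_sum, hm,
        hai, D3.emb_zero, mul_zero, neg_zero]
    have := eq_of_sum_mul_eq_of_le (fun c => (hnonneg c).1) hsum
      (fun c hc => neg_nonpos.2 (D3.emb_mul_emb_nonneg ((hchain b c hb hc).imp (· i) (· i))))
      hm' hb
    simpa using this

theorem eq_of_hasMarginal_emb (hα : 0 < α) (hdist : IsDist n lam)
    (hmarg : HasMarginal α n lam (D3.emb α ∘ a)) (hchain : ChainSupp n lam)
    {b : Fin n → D3} (hb : lam b ≠ 0) : b = a :=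
  funext fun i => D3.emb_injective hα (emb_apply_eq_of_hasMarginal hα.le hdist hmarg hchain hb i)

theorem sum_mul_eq_of_hasMarginal_emb (hα : 0 < α) (hdist : IsDist n lam)
    (hmarg : HasMarginal α n lam (D3.emb α ∘ a)) (hchain : ChainSupp n lam)
    (f : (Fin n → D3) → ℝ) : ∑ b, lam b * f b = f a := by
  calc ∑ b, lam b * f b = ∑ b, lam b * f a := by
        refine sum_congr rfl fun b _ => ?_
        by_cases hb : lam b = 0
        · simp [hb]
        · rw [eq_of_hasMarginal_emb hα hdist hmarg hchain hb]
    _ = f a := by rw [← sum_mul, hdist.2, one_mul]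

theorem le_sum_mul_of_isDist (hdist : IsDist n lam) {f : (Fin n → D3) → ℝ} {m : ℝ}
    (hm : ∀ a, m ≤ f a) : m ≤ ∑ a, lam a * f a :=
  calc m = ∑ a, lam a * m := by rw [← sum_mul, hdist.2, one_mul]
    _ ≤ ∑ a, lam a * f a := sum_le_sum fun a _ => mul_le_mul_of_nonneg_left (hm a) (hdist.1 a).1

end ChainDistribution

/-- the minimum of `f` over `Dⁿ` equals the minimum of `f^L` over `[-α,1]ⁿ`. -/
theorem stmt4 (α : ℝ) (hα : α ∈ Set.Ioc (0 : ℝ) 1) (n : ℕ) (f : (Fin n → D3) → ℝ)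
    (Λ : (Fin n → ℝ) → (Fin n → D3) → ℝ)
    (hΛ : ∀ x ∈ Box α n, IsDist n (Λ x) ∧ HasMarginal α n (Λ x) x ∧ ChainSupp n (Λ x)) :
    sInf {y | ∃ a : Fin n → D3, y = f a}
      = sInf {y | ∃ x ∈ Box α n, y = ∑ a : Fin n → D3, Λ x a * f a} := by
  obtain ⟨a, ha⟩ := Finite.exists_min f
  have hbox := emb_comp_mem_box hα.1.le a
  obtain ⟨hdist, hmarg, hchain⟩ := hΛ _ hbox
  have hleast_f : IsLeast {y | ∃ a : Fin n → D3, y = f a} (f a) :=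
    ⟨⟨a, rfl⟩, by rintro _ ⟨b, rfl⟩; exact ha b⟩
  have hleast_L : IsLeast {y | ∃ x ∈ Box α n, y = ∑ a : Fin n → D3, Λ x a * f a} (f a) :=
    ⟨⟨_, hbox, (sum_mul_eq_of_hasMarginal_emb hα.1 hdist hmarg hchain f).symm⟩,
      by rintro _ ⟨x, hx, rfl⟩; exact le_sum_mul_of_isDist (hΛ x hx).1 ha⟩
  rw [hleast_f.csInf_eq, hleast_L.csInf_eq]
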